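/- arXiv:1511.06132 — 2 statements merged into one kernel-verified Lean document; each statement's English description precedes it below -/
import Mathlib

section
/- Let G be a connected simple graph with n vertices, m edges, and diameter ρ. Then √(n² + 4m) ≤ DEE(G) ≤ n - 1 + e^{ρ√(n(n-1))}, and equality holds in either inequality if and only if G is the single-vertex graph K₁. -/
namespace DistanceEstrada

variable {n : ℕ}

/-- The distance matrix of a simple graph on `Fin n`. -/
noncomputable def distMatrix (G : SimpleGraph (Fin n)) : Matrix (Fin n) (Fin n) ℝ :=
  fun i j => (G.dist i j : ℝ)

lemma distMatrix_isHermitian (G : SimpleGraph (Fin n)) : (distMatrix G).IsHermitian := by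
  unfold Matrix.IsHermitian
  ext i j
  simp [distMatrix, Matrix.conjTranspose_apply, SimpleGraph.dist_comm]

/-- The distance eigenvalues of `G` (in no particular order). -/
noncomputable def distEig (G : SimpleGraph (Fin n)) : Fin n → ℝ :=
  (distMatrix_isHermitian G).eigenvalues

/-- The distance Estrada index. -/
noncomputable def DEE (G : SimpleGraph (Fin n)) : ℝ :=
  ∑ i, Real.exp (distEig G i)

open Classical in
/-- The adjacency matrix of `G` over `ℝ`. -/
noncomputable def adjMat (G : SimpleGraph (Fin n)) : Matrix (Fin n) (Fin n) ℝ :=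
  fun i j => if G.Adj i j then 1 else 0

lemma adjMat_isHermitian (G : SimpleGraph (Fin n)) : (adjMat G).IsHermitian := by
  unfold Matrix.IsHermitian
  ext i j
  simp only [adjMat, Matrix.conjTranspose_apply, star_trivial]
  rw [SimpleGraph.adj_comm]

/-- The adjacency eigenvalues of `G` (in no particular order). -/
noncomputable def adjEig (G : SimpleGraph (Fin n)) : Fin n → ℝ :=
  (adjMat_isHermitian G).eigenvalues

/-- The Estrada index. -/
noncomputable def EE (G : SimpleGraph (Fin n)) : ℝ :=
  ∑ i, Real.exp (adjEig G i)

/-!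
Write `φ(x) = eˣ - 1 - x` and let `λ₁, …, λₙ` be the distance eigenvalues, so that
`∑ λᵢ = tr D = 0`, `∑ λᵢ² = tr D² = ∑ᵤᵥ d(u,v)²` and `∑ λᵢ³ = tr D³ ≥ 0`. Then
`DEE² = n² + ∑ᵢⱼ φ(λᵢ + λⱼ)`; keeping only the diagonal terms and using `φ(x) ≥ x²/2 + x³/6`
gives `DEE² ≥ n² + 2 ∑ λᵢ² ≥ n² + 4m`. For the upper bound,
`DEE = n + ∑ φ(λᵢ) ≤ n + ∑ φ(|λᵢ|) ≤ n + φ(T)` with `T = √(∑ λᵢ²) ≤ ρ √(n(n-1))`, comparing the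
power series of `φ` termwise via `∑ |λᵢ|ᵏ ≤ Tᵏ` for `k ≥ 2`. Both inequalities are strict as
soon as `n ≥ 2`, since then `T > 0`.
-/
open Finset

noncomputable def expTail (x : ℝ) : ℝ := Real.exp x - 1 - x

lemma expTail_nonneg (x : ℝ) : 0 ≤ expTail x := by
  unfold expTail
  linarith [Real.add_one_le_exp x]

lemma expTail_le_expTail_abs (x : ℝ) : expTail x ≤ expTail |x| := by
  rcases le_total 0 x with hx | hx
  · rw [abs_of_nonneg hx]
  · have h := Real.self_le_sinh_iff.2 (neg_nonneg.2 hx)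
    rw [Real.sinh_eq, neg_neg] at h
    rw [abs_of_nonpos hx, expTail, expTail]
    linarith

-- `g y = e⁻ʸ (1 + y + y²/2 + y³/6)` has `g' y = -e⁻ʸ y³/6`, so `g` has strict maximum `g 0 = 1`.
lemma cubic_taylor_lt_exp {y : ℝ} (hy : y ≠ 0) : 1 + y + y ^ 2 / 2 + y ^ 3 / 6 < Real.exp y := by
  set g : ℝ → ℝ := fun y => Real.exp (-y) * (1 + y + y ^ 2 / 2 + y ^ 3 / 6) with hg_def
  have hg : ∀ y, HasDerivAt g (-(Real.exp (-y) * y ^ 3 / 6)) y := fun y => by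
    have hp : HasDerivAt (fun y : ℝ => 1 + y + y ^ 2 / 2 + y ^ 3 / 6) (1 + y + y ^ 2 / 2) y :=
      ((((hasDerivAt_id' y).const_add 1).add ((hasDerivAt_pow 2 y).div_const 2)).add
        ((hasDerivAt_pow 3 y).div_const 6)).congr_deriv (by norm_num; ring)
    have he : HasDerivAt (fun y : ℝ => Real.exp (-y)) (-Real.exp (-y)) y := by
      simpa using (hasDerivAt_neg y).exp
    exact (he.mul hp).congr_deriv (by ring)
  have hcont : Continuous g := by fun_prop
  have hlt : g y < g 0 := by
    rcases hy.lt_or_gt with hneg | hpos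
    · refine strictMonoOn_of_deriv_pos (convex_Iic 0) hcont.continuousOn (fun x hx => ?_)
        (Set.mem_Iic.2 hneg.le) Set.self_mem_Iic hneg
      rw [interior_Iic, Set.mem_Iio] at hx
      rw [(hg x).deriv]
      nlinarith [Real.exp_pos (-x), Odd.pow_neg (by decide : Odd 3) hx]
    · refine strictAntiOn_of_deriv_neg (convex_Ici 0) hcont.continuousOn (fun x hx => ?_)
        Set.self_mem_Ici (Set.mem_Ici.2 hpos.le) hpos
      rw [interior_Ici, Set.mem_Ioi] at hx
      rw [(hg x).deriv]
      nlinarith [Real.exp_pos (-x), pow_pos hx 3]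
  simpa [hg_def, Real.exp_neg, inv_mul_lt_iff₀ (Real.exp_pos y)] using hlt

lemma cubic_lt_expTail {x : ℝ} (hx : x ≠ 0) : x ^ 2 / 2 + x ^ 3 / 6 < expTail x := by
  unfold expTail
  linarith [cubic_taylor_lt_exp hx]

lemma cubic_le_expTail (x : ℝ) : x ^ 2 / 2 + x ^ 3 / 6 ≤ expTail x := by
  rcases eq_or_ne x 0 with rfl | hx
  · simp [expTail]
  · exact (cubic_lt_expTail hx).le

lemma expTail_eq_tsum (x : ℝ) :
    expTail x = ∑' k : ℕ, x ^ (k + 2) / (k + 2).factorial := by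
  rw [expTail, Real.exp_eq_exp_ℝ, NormedSpace.exp_eq_tsum_div]
  beta_reduce
  rw [← (Real.summable_pow_div_factorial x).sum_add_tsum_nat_add 2]
  simp [Finset.sum_range_succ]
  ring

lemma sum_pow_le_sqrt_sum_sq_pow {ι : Type*} (s : Finset ι) {a : ι → ℝ} (ha : ∀ i ∈ s, 0 ≤ a i)
    (k : ℕ) : ∑ i ∈ s, a i ^ (k + 2) ≤ √(∑ i ∈ s, a i ^ 2) ^ (k + 2) := by
  set T := √(∑ i ∈ s, a i ^ 2)
  have hT : T ^ 2 = ∑ i ∈ s, a i ^ 2 := Real.sq_sqrt (sum_nonneg fun i _ => sq_nonneg _)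
  have hle : ∀ i ∈ s, a i ≤ T := fun i hi =>
    Real.le_sqrt_of_sq_le (single_le_sum (fun j _ => sq_nonneg (a j)) hi)
  calc ∑ i ∈ s, a i ^ (k + 2) = ∑ i ∈ s, a i ^ 2 * a i ^ k := by simp only [pow_add, mul_comm]
    _ ≤ ∑ i ∈ s, a i ^ 2 * T ^ k := sum_le_sum fun i hi =>
        mul_le_mul_of_nonneg_left (pow_le_pow_left₀ (ha i hi) (hle i hi) k) (sq_nonneg _)
    _ = T ^ (k + 2) := by rw [← sum_mul, ← hT, ← pow_add, add_comm]

lemma sum_expTail_le_expTail_sqrt_sum_sq {ι : Type*} (s : Finset ι) {a : ι → ℝ}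
    (ha : ∀ i ∈ s, 0 ≤ a i) : ∑ i ∈ s, expTail (a i) ≤ expTail √(∑ i ∈ s, a i ^ 2) := by
  have hsum (x : ℝ) : Summable fun k : ℕ => x ^ (k + 2) / (k + 2).factorial :=
    (summable_nat_add_iff 2).2 (Real.summable_pow_div_factorial x)
  simp only [expTail_eq_tsum]
  rw [← Summable.tsum_finsetSum fun i _ => hsum (a i)]
  refine (summable_sum fun i _ => hsum (a i)).tsum_le_tsum (fun k => ?_) (hsum _)
  rw [← sum_div]
  gcongr
  exact sum_pow_le_sqrt_sum_sq_pow s ha k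

section ExpSums

variable {ι : Type*} [Fintype ι] {μ : ι → ℝ}

lemma sq_sum_exp_eq (h0 : ∑ i, μ i = 0) :
    (∑ i, Real.exp (μ i)) ^ 2 = Fintype.card ι ^ 2 + ∑ i, ∑ j, expTail (μ i + μ j) := by
  simp [expTail, sq, sum_mul_sum, ← Real.exp_add, sum_add_distrib, ← mul_sum, h0]

lemma card_sq_add_two_mul_sum_sq_lt_sq_sum_exp (h0 : ∑ i, μ i = 0) (h3 : 0 ≤ ∑ i, μ i ^ 3)
    {i₀ : ι} (hi₀ : μ i₀ ≠ 0) :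
    Fintype.card ι ^ 2 + 2 * ∑ i, μ i ^ 2 < (∑ i, Real.exp (μ i)) ^ 2 := by
  have hdiag : ∑ i, ((μ i + μ i) ^ 2 / 2 + (μ i + μ i) ^ 3 / 6) < ∑ i, expTail (μ i + μ i) :=
    sum_lt_sum (fun i _ => cubic_le_expTail _)
      ⟨i₀, mem_univ _, cubic_lt_expTail (by simpa using hi₀)⟩
  have hpoly : ∑ i, ((μ i + μ i) ^ 2 / 2 + (μ i + μ i) ^ 3 / 6) =
      2 * ∑ i, μ i ^ 2 + 4 / 3 * ∑ i, μ i ^ 3 := by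
    rw [mul_sum, mul_sum, ← sum_add_distrib]
    exact sum_congr rfl fun i _ => by ring
  have hoff : ∑ i, expTail (μ i + μ i) ≤ ∑ i, ∑ j, expTail (μ i + μ j) :=
    sum_le_sum fun i _ =>
      single_le_sum (f := fun j => expTail (μ i + μ j)) (fun j _ => expTail_nonneg _) (mem_univ i)
  rw [sq_sum_exp_eq h0]
  linarith

lemma sum_exp_le_card_add_expTail (h0 : ∑ i, μ i = 0) :
    ∑ i, Real.exp (μ i) ≤ Fintype.card ι + expTail √(∑ i, μ i ^ 2) :=
  calc ∑ i, Real.exp (μ i) = Fintype.card ι + ∑ i, expTail (μ i) := by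
        simp [expTail, sum_sub_distrib, h0]
    _ ≤ Fintype.card ι + ∑ i, expTail |μ i| := by
        gcongr with i
        exact expTail_le_expTail_abs _
    _ ≤ Fintype.card ι + expTail √(∑ i, μ i ^ 2) := by
        simpa using sum_expTail_le_expTail_sqrt_sum_sq univ fun i _ => abs_nonneg (μ i)

end ExpSums

section Spectrum

variable {ι : Type*} [Fintype ι]

lemma _root_.Matrix.IsHermitian.trace_pow_eq_sum_eigenvalues_pow {𝕜 : Type*} [RCLike 𝕜]
    [DecidableEq ι] {A : Matrix ι ι 𝕜} (hA : A.IsHermitian) (k : ℕ) :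
    (A ^ k).trace = ∑ i, (hA.eigenvalues i : 𝕜) ^ k := by
  conv_lhs => rw [hA.spectral_theorem]
  rw [← map_pow, Unitary.conjStarAlgAut_apply, Matrix.trace_mul_cycle,
    Unitary.coe_star_mul_self, one_mul, Matrix.diagonal_pow, Matrix.trace_diagonal]
  simp

lemma _root_.Matrix.IsSymm.trace_mul_self {R : Type*} [CommSemiring R] {A : Matrix ι ι R}
    (hA : A.IsSymm) : (A * A).trace = ∑ i, ∑ j, A i j ^ 2 := by
  simp only [Matrix.trace, Matrix.diag, Matrix.mul_apply, sq]
  exact sum_congr rfl fun i _ => sum_congr rfl fun j _ => by rw [hA.apply j i]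

lemma _root_.Matrix.trace_pow_nonneg {R : Type*} [CommSemiring R] [PartialOrder R] [IsOrderedRing R]
    [DecidableEq ι] {A : Matrix ι ι R} (hA : ∀ i j, 0 ≤ A i j) (k : ℕ) : 0 ≤ (A ^ k).trace :=
  sum_nonneg fun i _ => Matrix.pow_apply_nonneg hA k i i

end Spectrum

section Distances

variable {V : Type*} [Fintype V] (G : SimpleGraph V)

lemma two_mul_card_edgeFinset_le_sum_sq_dist [DecidableRel G.Adj] :
    2 * #G.edgeFinset ≤ ∑ u, ∑ v, G.dist u v ^ 2 := by
  classical
  rw [← G.sum_degrees_eq_twice_card_edges]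
  refine sum_le_sum fun u _ => ?_
  rw [← G.card_neighborFinset_eq_degree, G.neighborFinset_eq_filter, card_filter]
  refine sum_le_sum fun v _ => ?_
  split_ifs with h
  · simp [SimpleGraph.dist_eq_one_iff_adj.2 h]
  · positivity

lemma sum_sq_dist_le (hG : G.Connected) :
    ∑ u, ∑ v, G.dist u v ^ 2 ≤ Fintype.card V * (Fintype.card V - 1) * G.diam ^ 2 := by
  classical
  have : Nonempty V := hG.nonempty
  have hdiam := G.connected_iff_ediam_ne_top.1 hG
  calc ∑ u, ∑ v, G.dist u v ^ 2 = ∑ u, ∑ v ∈ univ.erase u, G.dist u v ^ 2 :=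
        sum_congr rfl fun u _ => (sum_erase _ (by simp)).symm
    _ ≤ ∑ u, ∑ v ∈ univ.erase u, G.diam ^ 2 := by
        gcongr
        exact SimpleGraph.dist_le_diam hdiam
    _ = Fintype.card V * (Fintype.card V - 1) * G.diam ^ 2 := by
        simp [card_erase_of_mem, mul_assoc]

lemma sum_sq_dist_pos [Nontrivial V] (hG : G.Connected) : 0 < ∑ u, ∑ v, G.dist u v ^ 2 := by
  obtain ⟨u, v, huv⟩ := exists_pair_ne V
  exact sum_pos' (fun _ _ => Nat.zero_le _) ⟨u, mem_univ _,
    sum_pos' (fun _ _ => Nat.zero_le _) ⟨v, mem_univ _, pow_pos (hG.pos_dist_of_ne huv) 2⟩⟩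

end Distances

section DistanceSpectrum

variable (G : SimpleGraph (Fin n))

lemma distMatrix_isSymm : (distMatrix G).IsSymm :=
  Matrix.IsSymm.ext fun i j => by simp [distMatrix, SimpleGraph.dist_comm]

lemma sum_distEig_pow (k : ℕ) : ∑ i, distEig G i ^ k = (distMatrix G ^ k).trace := by
  have h := (distMatrix_isHermitian G).trace_pow_eq_sum_eigenvalues_pow k
  simp only [RCLike.ofReal_real_eq_id, id_eq] at h
  exact h.symm

lemma sum_distEig_eq_zero : ∑ i, distEig G i = 0 := by
  simpa [distMatrix, Matrix.trace] using sum_distEig_pow G 1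

lemma sum_distEig_sq : ∑ i, distEig G i ^ 2 = ∑ u, ∑ v, (G.dist u v : ℝ) ^ 2 := by
  rw [sum_distEig_pow, sq, (distMatrix_isSymm G).trace_mul_self]
  rfl

lemma sum_distEig_pow_three_nonneg : 0 ≤ ∑ i, distEig G i ^ 3 := by
  rw [sum_distEig_pow]
  exact Matrix.trace_pow_nonneg (fun i j => Nat.cast_nonneg _) 3

lemma sqrt_lt_DEE [DecidableRel G.Adj] (hG : G.Connected) (hn : 2 ≤ n) :
    √((n : ℝ) ^ 2 + 4 * #G.edgeFinset) < DEE G := by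
  have : Nontrivial (Fin n) := Fin.nontrivial_iff_two_le.2 hn
  have hS : 0 < ∑ i, distEig G i ^ 2 := by
    rw [sum_distEig_sq]
    exact_mod_cast sum_sq_dist_pos G hG
  obtain ⟨i₀, hi₀⟩ : ∃ i, distEig G i ≠ 0 := by
    by_contra! h
    simp [h] at hS
  have hm : (2 * #G.edgeFinset : ℝ) ≤ ∑ i, distEig G i ^ 2 := by
    rw [sum_distEig_sq]
    exact_mod_cast two_mul_card_edgeFinset_le_sum_sq_dist G
  have hlt := card_sq_add_two_mul_sum_sq_lt_sq_sum_exp (sum_distEig_eq_zero G)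
    (sum_distEig_pow_three_nonneg G) hi₀
  have hpos : 0 < DEE G := sum_pos (fun i _ => Real.exp_pos _) univ_nonempty
  rw [Real.sqrt_lt' hpos, DEE]
  simp only [Fintype.card_fin] at hlt
  linarith

lemma DEE_lt_sub_one_add_exp (hG : G.Connected) (hn : 2 ≤ n) :
    DEE G < n - 1 + Real.exp (G.diam * √(n * (n - 1))) := by
  have : Nontrivial (Fin n) := Fin.nontrivial_iff_two_le.2 hn
  set T := √(∑ i, distEig G i ^ 2)
  have hT : 0 < T := by
    rw [Real.sqrt_pos, sum_distEig_sq]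
    exact_mod_cast sum_sq_dist_pos G hG
  have hn1 : (1 : ℝ) ≤ n := by exact_mod_cast (by omega : 1 ≤ n)
  have hTR : T ≤ G.diam * √(n * (n - 1)) := by
    refine Real.sqrt_le_iff.2 ⟨by positivity, ?_⟩
    rw [mul_pow, Real.sq_sqrt (by nlinarith), sum_distEig_sq]
    have h := sum_sq_dist_le G hG
    rw [Fintype.card_fin] at h
    calc ∑ u, ∑ v, (G.dist u v : ℝ) ^ 2 ≤ ((n * (n - 1) * G.diam ^ 2 : ℕ) : ℝ) := by
          exact_mod_cast h
      _ = G.diam ^ 2 * (n * (n - 1)) := by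
          push_cast [Nat.cast_pred (by omega : 0 < n)]
          ring
  have hle := sum_exp_le_card_add_expTail (sum_distEig_eq_zero G)
  rw [Fintype.card_fin, expTail] at hle
  have := Real.exp_le_exp.2 hTR
  unfold DEE
  linarith

end DistanceSpectrum

lemma DEE_fin_one (G : SimpleGraph (Fin 1)) : DEE G = 1 := by
  have h := sum_distEig_eq_zero G
  simp only [Fin.sum_univ_one] at h
  simp [DEE, h]

/-- **Theorem 1 (Gutman et al.).** For a connected graph `G` with `n` vertices, `m` edges and
diameter `ρ`, `√(n² + 4m) ≤ DEE(G) ≤ n - 1 + e^{ρ √(n(n-1))}`, with equality on either side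
iff `G = K₁`, i.e. `n = 1`. -/
theorem distance_estrada_basic_bounds {n m : ℕ} (G : SimpleGraph (Fin n))
    [DecidableRel G.Adj] (hconn : G.Connected) (hm : G.edgeFinset.card = m) :
    (Real.sqrt ((n : ℝ) ^ 2 + 4 * m) ≤ DEE G ∧
      DEE G ≤ (n : ℝ) - 1 + Real.exp ((G.diam : ℝ) * Real.sqrt ((n : ℝ) * ((n : ℝ) - 1)))) ∧
    (Real.sqrt ((n : ℝ) ^ 2 + 4 * m) = DEE G ↔ n = 1) ∧
    (DEE G = (n : ℝ) - 1 + Real.exp ((G.diam : ℝ) * Real.sqrt ((n : ℝ) * ((n : ℝ) - 1))) ↔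
      n = 1) := by
  subst hm
  rcases Nat.lt_or_ge n 2 with hn | hn
  · obtain rfl : n = 1 := by
      have := Fin.pos_iff_nonempty.2 hconn.nonempty
      omega
    have hm : #G.edgeFinset = 0 := by simpa using G.card_edgeFinset_le_card_choose_two
    simp [hm, DEE_fin_one]
  · have hl := sqrt_lt_DEE G hconn hn
    have hu := DEE_lt_sub_one_add_exp G hconn hn
    exact ⟨⟨hl.le, hu.le⟩, iff_of_false hl.ne (by omega), iff_of_false hu.ne (by omega)⟩

end DistanceEstrada
end

section
/- Let G be a connected simple graph on n ≥ 2 vertices with largest distance eigenvalue λ_1(D). Then DEE(G) ≥ e^{λ_1(D)} + (n-1)·e^{-λ_1(D)/(n-1)}, with equality if and only if λ_2(D) = λ_3(D) = ... = λ_n(D). -/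
namespace DistanceEstrada

variable {n : ℕ}

/-! The trace of the distance matrix vanishes, so the eigenvalues other than `λ₁` sum to `-λ₁`;
Jensen's inequality for the strictly convex `exp`, applied to these `n - 1` eigenvalues with equal
weights, gives the bound together with its equality case. -/

open Finset Real

section ExpMean

variable {ι : Type*} (s : Finset ι) (x : ι → ℝ)

lemma sum_inv_card_smul (y : ι → ℝ) : ∑ i ∈ s, (#s : ℝ)⁻¹ • y i = (∑ i ∈ s, y i) / #s := by
  rw [← smul_sum, smul_eq_mul, inv_mul_eq_div]

lemma sum_inv_card (hs : s.Nonempty) : ∑ _i ∈ s, (#s : ℝ)⁻¹ = 1 := by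
  rw [sum_const, nsmul_eq_mul, mul_inv_cancel₀ (by exact_mod_cast hs.card_ne_zero)]

lemma card_mul_exp_mean_le_sum_exp :
    (#s : ℝ) * exp ((∑ i ∈ s, x i) / #s) ≤ ∑ i ∈ s, exp (x i) := by
  obtain rfl | hs := s.eq_empty_or_nonempty
  · simp
  have hjensen := strictConvexOn_exp.convexOn.map_sum_le (t := s) (w := fun _ ↦ (#s : ℝ)⁻¹)
    (p := x) (fun _ _ ↦ by positivity) (sum_inv_card s hs) (fun _ _ ↦ Set.mem_univ _)
  rw [sum_inv_card_smul, sum_inv_card_smul, le_div_iff₀ (by exact_mod_cast hs.card_pos)]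
    at hjensen
  linarith

lemma card_mul_exp_mean_eq_sum_exp_iff :
    (#s : ℝ) * exp ((∑ i ∈ s, x i) / #s) = ∑ i ∈ s, exp (x i) ↔
      ∀ j ∈ s, ∀ k ∈ s, x j = x k := by
  obtain rfl | hs := s.eq_empty_or_nonempty
  · simp
  have hcard : (#s : ℝ) ≠ 0 := by exact_mod_cast hs.card_ne_zero
  constructor
  · intro heq j hj k hk
    refine strictConvexOn_exp.eq_of_le_map_sum (t := s) (w := fun _ ↦ (#s : ℝ)⁻¹)
      (fun _ _ ↦ by positivity) (sum_inv_card s hs) (fun _ _ ↦ Set.mem_univ _) ?_ hj hk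
    rw [sum_inv_card_smul, sum_inv_card_smul, ← heq, mul_div_cancel_left₀ _ hcard]
  · intro hconst
    obtain ⟨j, hj⟩ := hs
    have hx : ∀ i ∈ s, x i = x j := fun i hi ↦ hconst i hi j hj
    rw [sum_congr rfl hx, sum_congr rfl fun i hi ↦ congrArg exp (hx i hi)]
    simp only [sum_const, nsmul_eq_mul]
    rw [mul_div_cancel_left₀ _ hcard]

end ExpMean

lemma forall_ne_apply_eq_of_apply_eq {ι α : Type*} {f : ι → α} {i i' : ι} (hii' : f i = f i')
    (hf : ∀ j k, j ≠ i → k ≠ i → f j = f k) : ∀ j k, j ≠ i' → k ≠ i' → f j = f k := by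
  obtain rfl | hne := eq_or_ne i i'
  · exact hf
  have hi' : ∀ j, j ≠ i' → f j = f i' := fun j hj ↦ by
    obtain rfl | hji := eq_or_ne j i
    · exact hii'
    · exact hf j i' hji hne.symm
  exact fun j k hj hk ↦ (hi' j hj).trans (hi' k hk).symm

lemma trace_distMatrix (G : SimpleGraph (Fin n)) : (distMatrix G).trace = 0 := by
  simp [Matrix.trace, distMatrix]

lemma sum_distEig (G : SimpleGraph (Fin n)) : ∑ i, distEig G i = 0 := by
  simpa [distEig, trace_distMatrix] using ((distMatrix_isHermitian G).trace_eq_sum_eigenvalues).symm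

lemma sum_distEig_erase (G : SimpleGraph (Fin n)) (i : Fin n) :
    ∑ j ∈ univ.erase i, distEig G j = -distEig G i := by
  linarith [add_sum_erase univ (distEig G) (mem_univ i), sum_distEig G]

lemma DEE_eq_exp_add_sum_erase (G : SimpleGraph (Fin n)) (i : Fin n) :
    DEE G = exp (distEig G i) + ∑ j ∈ univ.erase i, exp (distEig G j) :=
  (add_sum_erase univ (fun j ↦ exp (distEig G j)) (mem_univ i)).symm

lemma natCast_card_univ_erase (i : Fin n) : ((univ.erase i).card : ℝ) = n - 1 := by
  rw [card_erase_of_mem (mem_univ i), card_univ, Fintype.card_fin,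
    Nat.cast_sub i.pos, Nat.cast_one]

theorem distance_estrada_lower_bound_spectral_radius_general {n : ℕ}
    (G : SimpleGraph (Fin n))
    (lam1 : ℝ) (hlam1 : IsGreatest (Set.range (distEig G)) lam1) :
    Real.exp lam1 + ((n : ℝ) - 1) * Real.exp (-lam1 / ((n : ℝ) - 1)) ≤ DEE G ∧
    (Real.exp lam1 + ((n : ℝ) - 1) * Real.exp (-lam1 / ((n : ℝ) - 1)) = DEE G ↔
      ∃ i : Fin n, distEig G i = lam1 ∧
        ∀ j k : Fin n, j ≠ i → k ≠ i → distEig G j = distEig G k) := by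
  obtain ⟨⟨i₀, rfl⟩, -⟩ := hlam1
  rw [← natCast_card_univ_erase i₀, ← sum_distEig_erase G i₀, DEE_eq_exp_add_sum_erase G i₀]
  refine ⟨add_le_add_right (card_mul_exp_mean_le_sum_exp _ _) _, ?_⟩
  rw [add_right_inj, card_mul_exp_mean_eq_sum_exp_iff]
  simp only [mem_erase, mem_univ, and_true]
  exact ⟨fun h ↦ ⟨i₀, rfl, fun j k hj hk ↦ h j hj k hk⟩,
    fun ⟨i, hi, h⟩ j hj k hk ↦ forall_ne_apply_eq_of_apply_eq hi h j k hj hk⟩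

/-- Inner inequality in the proof of Theorem 3: for a connected graph `G` on `n ≥ 2` vertices
with largest distance eigenvalue `λ₁(D)`, `DEE(G) ≥ e^{λ₁(D)} + (n-1) e^{-λ₁(D)/(n-1)}`,
with equality iff `λ₂(D) = λ₃(D) = ⋯ = λₙ(D)`. -/
theorem distance_estrada_lower_bound_spectral_radius {n : ℕ} (hn : 2 ≤ n)
    (G : SimpleGraph (Fin n)) (hconn : G.Connected)
    (lam1 : ℝ) (hlam1 : IsGreatest (Set.range (distEig G)) lam1) :
    Real.exp lam1 + ((n : ℝ) - 1) * Real.exp (-lam1 / ((n : ℝ) - 1)) ≤ DEE G ∧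
    (Real.exp lam1 + ((n : ℝ) - 1) * Real.exp (-lam1 / ((n : ℝ) - 1)) = DEE G ↔
      ∃ i : Fin n, distEig G i = lam1 ∧
        ∀ j k : Fin n, j ≠ i → k ≠ i → distEig G j = distEig G k) :=
  distance_estrada_lower_bound_spectral_radius_general G lam1 hlam1

end DistanceEstrada
end
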